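/- arXiv:2507.02774 — 9 statements merged into one kernel-verified Lean document; each statement's English description precedes it below -/
import Mathlib

section
/- Let G=(V,E) be an undirected graph, t ∈ V, and for a set N ⊆ V define the interior I_t(N) as the set of vertices v ∈ V \ N such that no path from v to t exists in G with all vertices avoiding N, and H_t(N) = N ∪ I_t(N). Then for any sets A, B ⊆ V, letting N∩ = (A ∩ I_t(B)) ∪ (B ∩ I_t(A)) ∪ (A ∩ B), we have I_t(N∩) = I_t(A) ∩ I_t(B). -/
/-! The hull satisfies `H_t(N∩) = H_t(A) ∩ H_t(B)`, and the interior is the hull minus the set.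
For `⊆`, `N∩ ⊆ H_t(A)` and `H_t` is a closure operator. For `⊇`, on a walk from
`v ∈ H_t(A) ∩ H_t(B)` to `t` the first vertex in `A ∪ B` is either in `A ∩ B`, or in one set and
then, by the walk's prefix, in the interior of the other. Removing `N∩` from both sides gives the
theorem, since a vertex of `A ∩ H_t(B)` lies in `N∩`. -/

open Finset

variable {V : Type*}

/-- `N` is a vertex cut between `S` and `T`: every walk from a vertex of `S` to a
vertex of `T` contains a vertex of `N` (which may belong to `S ∪ T`). -/
def IsCut (G : SimpleGraph V) (S T N : Set V) : Prop :=
  ∀ s ∈ S, ∀ t ∈ T, ∀ p : G.Walk s t, ∃ u ∈ p.support, u ∈ N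

/-- The interior `I_t(N)`: vertices outside `N` from which every walk to `t`
passes through `N` (i.e. no path to `t` exists after deleting `N`). -/
def interiorSet (G : SimpleGraph V) (t : V) (N : Set V) : Set V :=
  {v | v ∉ N ∧ ∀ p : G.Walk v t, ∃ u ∈ p.support, u ∈ N}

/-- `H_t(N) = N ∪ I_t(N)`. -/
def hullSet (G : SimpleGraph V) (t : V) (N : Set V) : Set V :=
  N ∪ interiorSet G t N

/-- The minimum weight of a vertex cut between `S` and `T`. -/
noncomputable def sep [Fintype V] (G : SimpleGraph V) (w : V → ℝ) (S T : Set V) : ℝ :=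
  sInf {x : ℝ | ∃ N : Finset V, IsCut G S T ↑N ∧ x = ∑ v ∈ N, w v}

namespace SimpleGraph

variable {G : SimpleGraph V} {t : V} {N M A B : Set V}

lemma mem_hullSet_iff {v : V} :
    v ∈ hullSet G t N ↔ ∀ p : G.Walk v t, ∃ u ∈ p.support, u ∈ N := by
  refine ⟨?_, fun h => ?_⟩
  · rintro (hv | ⟨-, h⟩) p
    exacts [⟨v, p.start_mem_support, hv⟩, h p]
  · by_cases hv : v ∈ N
    exacts [Or.inl hv, Or.inr ⟨hv, h⟩]

lemma mem_interiorSet_iff {v : V} : v ∈ interiorSet G t N ↔ v ∈ hullSet G t N ∧ v ∉ N := by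
  rw [mem_hullSet_iff]
  exact and_comm

lemma mem_of_mem_hullSet_self (ht : t ∈ hullSet G t N) : t ∈ N := by
  obtain ⟨u, hu, huN⟩ := mem_hullSet_iff.1 ht Walk.nil
  rw [Walk.support_nil, List.mem_singleton] at hu
  exact hu ▸ huN

lemma mem_hullSet_of_adj {v w : V} (hv : v ∈ hullSet G t N) (hvN : v ∉ N) (hvw : G.Adj v w) :
    w ∈ hullSet G t N := by
  refine mem_hullSet_iff.2 fun p => ?_
  obtain ⟨u, hu, huN⟩ := mem_hullSet_iff.1 hv (Walk.cons hvw p)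
  rcases List.mem_cons.1 (Walk.support_cons hvw p ▸ hu) with rfl | hu
  exacts [absurd huN hvN, ⟨u, hu, huN⟩]

lemma hullSet_subset_of_subset_hullSet (h : N ⊆ hullSet G t M) :
    hullSet G t N ⊆ hullSet G t M := by
  classical
  intro v hv
  refine mem_hullSet_iff.2 fun p => ?_
  obtain ⟨u, hu, huN⟩ := mem_hullSet_iff.1 hv p
  obtain ⟨x, hx, hxM⟩ := mem_hullSet_iff.1 (h huN) (p.dropUntil u hu)
  exact ⟨x, p.support_dropUntil_subset_support hu hx, hxM⟩

lemma cap_cut_subset_hullSet_left :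
    (A ∩ interiorSet G t B) ∪ (B ∩ interiorSet G t A) ∪ (A ∩ B) ⊆ hullSet G t A := by
  rintro v ((⟨hA, -⟩ | ⟨-, hIA⟩) | ⟨hA, -⟩)
  exacts [Or.inl hA, Or.inr hIA, Or.inl hA]

lemma exists_mem_support_cap_cut {v : V} (p : G.Walk v t) (hA : v ∈ hullSet G t A)
    (hB : v ∈ hullSet G t B) :
    ∃ u ∈ p.support, u ∈ (A ∩ interiorSet G t B) ∪ (B ∩ interiorSet G t A) ∪ (A ∩ B) := by
  induction p with
  | nil => exact ⟨_, List.mem_singleton_self _,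
      Or.inr ⟨mem_of_mem_hullSet_self hA, mem_of_mem_hullSet_self hB⟩⟩
  | @cons v w _ hvw p ih =>
    have hv : v ∈ (Walk.cons hvw p).support := Walk.start_mem_support _
    by_cases hvA : v ∈ A <;> by_cases hvB : v ∈ B
    · exact ⟨v, hv, Or.inr ⟨hvA, hvB⟩⟩
    · exact ⟨v, hv, Or.inl (Or.inl ⟨hvA, mem_interiorSet_iff.2 ⟨hB, hvB⟩⟩)⟩
    · exact ⟨v, hv, Or.inl (Or.inr ⟨hvB, mem_interiorSet_iff.2 ⟨hA, hvA⟩⟩)⟩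
    · obtain ⟨u, hu, hcut⟩ :=
        ih (mem_hullSet_of_adj hA hvA hvw) (mem_hullSet_of_adj hB hvB hvw)
      exact ⟨u, Walk.support_subset_support_cons p hvw hu, hcut⟩

lemma hullSet_cap_cut :
    hullSet G t ((A ∩ interiorSet G t B) ∪ (B ∩ interiorSet G t A) ∪ (A ∩ B))
      = hullSet G t A ∩ hullSet G t B := by
  refine subset_antisymm (Set.subset_inter ?_ ?_) fun v ⟨hA, hB⟩ =>
    mem_hullSet_iff.2 fun p => exists_mem_support_cap_cut p hA hB
  · exact hullSet_subset_of_subset_hullSet cap_cut_subset_hullSet_left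
  · refine hullSet_subset_of_subset_hullSet fun v hv => ?_
    rw [Set.union_comm (A ∩ _), Set.inter_comm A B] at hv
    exact cap_cut_subset_hullSet_left hv

end SimpleGraph

open SimpleGraph in
theorem interior_of_cap_cut_general (G : SimpleGraph V) (t : V) (A B : Set V) :
    interiorSet G t ((A ∩ interiorSet G t B) ∪ (B ∩ interiorSet G t A) ∪ (A ∩ B))
      = interiorSet G t A ∩ interiorSet G t B := by
  ext v
  rw [mem_interiorSet_iff, hullSet_cap_cut, Set.mem_inter_iff, Set.mem_inter_iff,
    mem_interiorSet_iff, mem_interiorSet_iff]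
  constructor
  · rintro ⟨⟨hA, hB⟩, hv⟩
    have hvA : v ∉ A := fun hvA =>
      hv (hB.elim (fun hvB => Or.inr ⟨hvA, hvB⟩) fun hIB => Or.inl (Or.inl ⟨hvA, hIB⟩))
    have hvB : v ∉ B := fun hvB =>
      hv (hA.elim (fun hvA => Or.inr ⟨hvA, hvB⟩) fun hIA => Or.inl (Or.inr ⟨hvB, hIA⟩))
    exact ⟨⟨hA, hvA⟩, ⟨hB, hvB⟩⟩
  · rintro ⟨⟨hA, hvA⟩, ⟨hB, hvB⟩⟩
    refine ⟨⟨hA, hB⟩, ?_⟩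
    rintro ((⟨h, -⟩ | ⟨h, -⟩) | ⟨h, -⟩)
    exacts [hvA h, hvB h, hvA h]

theorem interior_of_cap_cut [Fintype V] (G : SimpleGraph V) (t : V) (A B : Set V) :
    interiorSet G t ((A ∩ interiorSet G t B) ∪ (B ∩ interiorSet G t A) ∪ (A ∩ B))
      = interiorSet G t A ∩ interiorSet G t B :=
  interior_of_cap_cut_general G t A B
end

section
/- Let G=(V,E) be an undirected graph, t ∈ V, and define I_t and H_t as usual. Then for any sets A, B ⊆ V, letting N∪ = (A \ I_t(B)) ∪ (B \ I_t(A)), we have I_t(A) ∪ I_t(B) ⊆ I_t(N∪) and H_t(A) ∪ H_t(B) ⊆ H_t(N∪). -/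
open Finset

variable {V : Type*}

/-!
Let `N = N∪ = (A \ I_t(B)) ∪ (B \ I_t(A))`. The key point is that every walk to `t` meeting
`A ∪ B` meets `N`: its last vertex `u` in `A ∪ B`, say `u ∈ A`, is joined to `t` by a
walk avoiding `B` except possibly at `u` itself, so `u ∉ I_t(B)`. Hence walks to `t` from
`I_t(A)` meet `N`, giving `I_t(A) ⊆ I_t(N)`; and a vertex of `A` lies either in `N` or
in `I_t(B) ⊆ I_t(N)`.
-/

namespace SimpleGraph.Walk

variable {G : SimpleGraph V}

theorem exists_last_mem {S : Set V} {x y : V} (p : G.Walk x y)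
    (h : ∃ u ∈ p.support, u ∈ S) :
    ∃ u ∈ S, ∃ q : G.Walk u y, q.support ⊆ p.support ∧ ∀ w ∈ q.support, w ∈ S → w = u := by
  induction p with
  | nil =>
    obtain ⟨u, hu, huS⟩ := h
    rw [support_nil, List.mem_singleton] at hu
    subst hu
    exact ⟨u, huS, nil, List.Subset.refl _, fun w hw _ => by simpa using hw⟩
  | @cons x _ _ hadj q ih =>
    by_cases hq : ∃ u ∈ q.support, u ∈ S
    · obtain ⟨u, huS, r, hr, hlast⟩ := ih hq
      exact ⟨u, huS, r, List.Subset.trans hr (List.subset_cons_self _ _), hlast⟩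
    · push Not at hq
      have hxS : x ∈ S := by
        obtain ⟨u, hu, huS⟩ := h
        rcases List.mem_cons.mp (support_cons hadj q ▸ hu) with rfl | hu'
        · exact huS
        · exact absurd huS (hq u hu')
      refine ⟨x, hxS, cons hadj q, List.Subset.refl _, fun w hw hwS => ?_⟩
      rcases List.mem_cons.mp (support_cons hadj q ▸ hw) with rfl | hw'
      · rfl
      · exact absurd hwS (hq w hw')

end SimpleGraph.Walk

section CupCut

variable (G : SimpleGraph V) (t : V)

/-- The set `N∪` of the paper. -/
def cupCut (A B : Set V) : Set V :=
  (A \ interiorSet G t B) ∪ (B \ interiorSet G t A)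

theorem cupCut_comm (A B : Set V) : cupCut G t A B = cupCut G t B A :=
  Set.union_comm _ _

variable {G t}

theorem notMem_interiorSet_of_walk {B : Set V} {u : V} (q : G.Walk u t)
    (hq : ∀ w ∈ q.support, w ∈ B → w = u) : u ∉ interiorSet G t B := by
  rintro ⟨huB, hmeet⟩
  obtain ⟨w, hw, hwB⟩ := hmeet q
  exact huB (hq w hw hwB ▸ hwB)

theorem exists_mem_cupCut_of_walk {A B : Set V} {x : V} (p : G.Walk x t)
    (h : ∃ u ∈ p.support, u ∈ A ∪ B) : ∃ u ∈ p.support, u ∈ cupCut G t A B := by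
  obtain ⟨u, hu, q, hsub, hlast⟩ := p.exists_last_mem h
  refine ⟨u, hsub q.start_mem_support, ?_⟩
  rcases hu with huA | huB
  · exact Or.inl ⟨huA, notMem_interiorSet_of_walk q fun w hw hwB => hlast w hw (Or.inr hwB)⟩
  · exact Or.inr ⟨huB, notMem_interiorSet_of_walk q fun w hw hwA => hlast w hw (Or.inl hwA)⟩

theorem interiorSet_subset_interiorSet_cupCut (A B : Set V) :
    interiorSet G t A ⊆ interiorSet G t (cupCut G t A B) := by
  rintro v ⟨hvA, hmeet⟩
  refine ⟨?_, fun p => ?_⟩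
  · rintro (⟨hA, -⟩ | ⟨-, hvI⟩)
    · exact hvA hA
    · exact hvI ⟨hvA, hmeet⟩
  · obtain ⟨u, hu, huA⟩ := hmeet p
    exact exists_mem_cupCut_of_walk p ⟨u, hu, Or.inl huA⟩

theorem hullSet_subset_hullSet_cupCut (A B : Set V) :
    hullSet G t A ⊆ hullSet G t (cupCut G t A B) := by
  rintro v (hvA | hvI)
  · by_cases hvB : v ∈ interiorSet G t B
    · rw [cupCut_comm]
      exact Or.inr (interiorSet_subset_interiorSet_cupCut B A hvB)
    · exact Or.inl (Or.inl ⟨hvA, hvB⟩)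
  · exact Or.inr (interiorSet_subset_interiorSet_cupCut A B hvI)

end CupCut

theorem interior_hull_of_cup_cut_general (G : SimpleGraph V) (t : V) (A B : Set V) :
    interiorSet G t A ∪ interiorSet G t B
        ⊆ interiorSet G t ((A \ interiorSet G t B) ∪ (B \ interiorSet G t A)) ∧
      hullSet G t A ∪ hullSet G t B
        ⊆ hullSet G t ((A \ interiorSet G t B) ∪ (B \ interiorSet G t A)) := by
  change _ ⊆ interiorSet G t (cupCut G t A B) ∧ _ ⊆ hullSet G t (cupCut G t A B)
  have hI := interiorSet_subset_interiorSet_cupCut (G := G) (t := t)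
  have hH := hullSet_subset_hullSet_cupCut (G := G) (t := t)
  refine ⟨Set.union_subset (hI A B) ?_, Set.union_subset (hH A B) ?_⟩ <;> rw [cupCut_comm]
  exacts [hI B A, hH B A]

theorem interior_hull_of_cup_cut [Fintype V] (G : SimpleGraph V) (t : V) (A B : Set V) :
    interiorSet G t A ∪ interiorSet G t B
        ⊆ interiorSet G t ((A \ interiorSet G t B) ∪ (B \ interiorSet G t A)) ∧
      hullSet G t A ∪ hullSet G t B
        ⊆ hullSet G t ((A \ interiorSet G t B) ∪ (B \ interiorSet G t A)) :=
  interior_hull_of_cup_cut_general G t A B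
end

section
/- Let G=(V,E) be an undirected graph with vertex weights w : V → ℝ≥0, and t ∈ V. For sets A, B ⊆ V define N∩ = (A ∩ I_t(B)) ∪ (B ∩ I_t(A)) ∪ (A ∩ B) and N∪ = (A \ I_t(B)) ∪ (B \ I_t(A)). Then w(A) + w(B) ≥ w(N∩) + w(N∪), where w(S) = Σ_{v ∈ S} w(v). -/
open Finset

variable {V : Type*}

/-!
Whatever the sets `I_t(A)`, `I_t(B)` are, every vertex of `N∩ ∪ N∪` lies in `A ∪ B` and every
vertex of `N∩ ∩ N∪` lies in `A ∩ B`. Inclusion–exclusion, `w(P) + w(Q) = w(P ∪ Q) + w(P ∩ Q)`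
applied to both pairs, and monotonicity of nonnegative weights then give the inequality.
-/

section FinsumMono

variable {α M : Type*} [AddCommMonoid M] [PartialOrder M] [IsOrderedAddMonoid M]
  {f : α → M} {s t : Set α}

theorem finsum_mem_le_finsum_mem_of_subset (hf : ∀ i, 0 ≤ f i) (hst : s ⊆ t) (ht : t.Finite) :
    ∑ᶠ i ∈ s, f i ≤ ∑ᶠ i ∈ t, f i := by
  rw [← finsum_mem_add_sdiff hst ht]
  exact le_add_of_nonneg_right (finsum_nonneg fun i => finsum_nonneg fun _ => hf i)

theorem finsum_mem_add_le_of_union_subset_of_inter_subset (hf : ∀ i, 0 ≤ f i)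
    {A B P Q : Set α} (hA : A.Finite) (hB : B.Finite)
    (hunion : P ∪ Q ⊆ A ∪ B) (hinter : P ∩ Q ⊆ A ∩ B) :
    ∑ᶠ i ∈ P, f i + ∑ᶠ i ∈ Q, f i ≤ ∑ᶠ i ∈ A, f i + ∑ᶠ i ∈ B, f i := by
  have hPQ : (P ∪ Q).Finite := (hA.union hB).subset hunion
  rw [← finsum_mem_union_inter (hPQ.subset Set.subset_union_left)
    (hPQ.subset Set.subset_union_right),
    ← finsum_mem_union_inter hA hB]
  exact add_le_add (finsum_mem_le_finsum_mem_of_subset hf hunion (hA.union hB))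
    (finsum_mem_le_finsum_mem_of_subset hf hinter (hA.inter_of_left B))

end FinsumMono

section UncrossSets

variable {α : Type*} (A B X Y : Set α)

theorem uncross_union_subset :
    ((A ∩ X) ∪ (B ∩ Y) ∪ (A ∩ B)) ∪ ((A \ X) ∪ (B \ Y)) ⊆ A ∪ B := by
  intro v
  simp only [Set.mem_union, Set.mem_inter_iff, Set.mem_sdiff]
  tauto

theorem uncross_inter_subset :
    ((A ∩ X) ∪ (B ∩ Y) ∪ (A ∩ B)) ∩ ((A \ X) ∪ (B \ Y)) ⊆ A ∩ B := by
  intro v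
  simp only [Set.mem_union, Set.mem_inter_iff, Set.mem_sdiff]
  tauto

end UncrossSets

theorem weight_cap_add_cup_le [Fintype V] (G : SimpleGraph V) (t : V)
    (w : V → ℝ) (hw : ∀ v, 0 ≤ w v) (A B : Set V) :
    (∑ᶠ v ∈ ((A ∩ interiorSet G t B) ∪ (B ∩ interiorSet G t A) ∪ (A ∩ B)), w v)
        + (∑ᶠ v ∈ ((A \ interiorSet G t B) ∪ (B \ interiorSet G t A)), w v)
      ≤ (∑ᶠ v ∈ A, w v) + (∑ᶠ v ∈ B, w v) :=
  finsum_mem_add_le_of_union_subset_of_inter_subset hw A.toFinite B.toFinite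
    (uncross_union_subset _ _ _ _) (uncross_inter_subset _ _ _ _)
end

section
/- Let G=(V,E) be an undirected graph with vertex weights w : V → ℝ≥0 and t ∈ V. For S ⊆ V with t ∉ S, define sep^w(S,t) as the minimum of w(N) over all vertex cuts N between S and {t} (i.e., sets N such that every path from a vertex of S to t contains a vertex of N; N may intersect S), and define Δ^w(S,v,t) = sep^w(S ∪ {v}, t) − sep^w(S, t). Then for all S ⊆ S' ⊆ V and all v, t ∈ V: Δ^w(S', v, t) ≤ Δ^w(S, v, t). -/
open Finset

variable {V : Type*}

/-- `Δ^w(S, v, t) = sep^w(S ∪ {v}, {t}) − sep^w(S, {t})`. -/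
noncomputable def delta [Fintype V] (G : SimpleGraph V) (w : V → ℝ) (S : Set V) (v t : V) : ℝ :=
  sep G w (S ∪ {v}) {t} - sep G w S {t}

/-! Uncrossing. Let `A` and `B` be minimum cuts from `X` and from `Y` to `t`, with hulls
`H_A ⊇ X` and `H_B ⊇ Y`. Then `(A \ I_B) ∪ (B \ I_A)` cuts `H_A ∪ H_B` from `t` and
`(A ∩ H_B) ∪ (B ∩ H_A)` cuts `H_A ∩ H_B` from `t`; every vertex of `A ∪ B` lies in at least one
of the two new cuts and every vertex lying in both belongs to `A ∩ B`, so their total weight is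
at most `w(A) + w(B)`. This gives `sep (X ∪ Y) + sep (X ∩ Y) ≤ sep X + sep Y`, and the theorem is
this submodularity for `X = S ∪ {v}`, `Y = S'`, together with monotonicity of `sep`. -/

namespace IsCut

variable {G : SimpleGraph V} {X X' T N N' : Set V}

theorem anti_left (h : IsCut G X T N) (hX : X' ⊆ X) : IsCut G X' T N :=
  fun s hs => h s (hX hs)

theorem mono_right (h : IsCut G X T N) (hN : N ⊆ N') : IsCut G X T N' := fun s hs t ht p =>
  let ⟨u, hu, huN⟩ := h s hs t ht p
  ⟨u, hu, hN huN⟩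

theorem subset_hullSet {t : V} (h : IsCut G X {t} N) : X ⊆ hullSet G t N := fun x hx =>
  or_iff_not_imp_left.2 fun hxN => ⟨hxN, h x hx t rfl⟩

theorem of_forall_adj {t : V} (ht : t ∈ X → t ∈ N)
    (hadj : ∀ ⦃x y⦄, x ∈ X → x ∉ N → G.Adj x y → y ∈ X) : IsCut G X {t} N := by
  rintro s hs _ rfl p
  induction p with
  | nil => exact ⟨_, SimpleGraph.Walk.start_mem_support _, ht hs⟩
  | @cons x y _ hxy q ih =>
    by_cases hxN : x ∈ N
    · exact ⟨x, SimpleGraph.Walk.start_mem_support _, hxN⟩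
    · obtain ⟨u, hu, huN⟩ := ih (hadj hs hxN hxy) ht
      exact ⟨u, by simp [hu], huN⟩

end IsCut

section Hull

variable {G : SimpleGraph V} {t : V} {A B : Set V}

theorem notMem_interiorSet_self : t ∉ interiorSet G t A := fun ⟨htA, hcut⟩ =>
  let ⟨_, hu, huA⟩ := hcut .nil
  htA (List.mem_singleton.1 hu ▸ huA)

theorem mem_of_mem_hullSet_self (ht : t ∈ hullSet G t A) : t ∈ A :=
  ht.resolve_right notMem_interiorSet_self

theorem mem_hullSet_of_adj {x y : V} (hx : x ∈ interiorSet G t A) (hxy : G.Adj x y) :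
    y ∈ hullSet G t A :=
  or_iff_not_imp_left.2 fun hyA => ⟨hyA, fun p => by
    obtain ⟨u, hu, huA⟩ := hx.2 (.cons hxy p)
    rcases List.mem_cons.1 (SimpleGraph.Walk.support_cons hxy p ▸ hu) with rfl | hu
    · exact (hx.1 huA).elim
    · exact ⟨u, hu, huA⟩⟩

theorem isCut_hullSet_union :
    IsCut G (hullSet G t A ∪ hullSet G t B) {t}
      ((A \ interiorSet G t B) ∪ (B \ interiorSet G t A)) := by
  refine IsCut.of_forall_adj (fun ht => ?_) fun x y hx hxN hxy => ?_
  · rcases ht with ht | ht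
    · exact .inl ⟨mem_of_mem_hullSet_self ht, notMem_interiorSet_self⟩
    · exact .inr ⟨mem_of_mem_hullSet_self ht, notMem_interiorSet_self⟩
  · by_cases hxA : x ∈ interiorSet G t A
    · exact .inl (mem_hullSet_of_adj hxA hxy)
    by_cases hxB : x ∈ interiorSet G t B
    · exact .inr (mem_hullSet_of_adj hxB hxy)
    · simp only [hullSet, Set.mem_union, Set.mem_sdiff] at hx hxN
      tauto

theorem isCut_hullSet_inter :
    IsCut G (hullSet G t A ∩ hullSet G t B) {t}
      ((A ∩ hullSet G t B) ∪ (B ∩ hullSet G t A)) := by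
  refine IsCut.of_forall_adj (fun ht => .inl ⟨mem_of_mem_hullSet_self ht.1, ht.2⟩)
    fun x y hx hxN hxy => ?_
  have hxA : x ∈ interiorSet G t A := hx.1.resolve_left fun hxA => hxN (.inl ⟨hxA, hx.2⟩)
  have hxB : x ∈ interiorSet G t B := hx.2.resolve_left fun hxB => hxN (.inr ⟨hxB, hx.1⟩)
  exact ⟨mem_hullSet_of_adj hxA hxy, mem_hullSet_of_adj hxB hxy⟩

end Hull

theorem Finset.sum_add_sum_le_sum_add_sum {ι M : Type*} [DecidableEq ι]
    [AddCommMonoid M] [PartialOrder M] [IsOrderedAddMonoid M] {f : ι → M}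
    (hf : ∀ i, 0 ≤ f i) {s t s' t' : Finset ι} (hunion : s' ∪ t' ⊆ s ∪ t)
    (hinter : s' ∩ t' ⊆ s ∩ t) : ∑ i ∈ s', f i + ∑ i ∈ t', f i ≤ ∑ i ∈ s, f i + ∑ i ∈ t, f i := by
  rw [← sum_union_inter, ← sum_union_inter (s₁ := s)]
  exact add_le_add (sum_le_sum_of_subset_of_nonneg hunion fun i _ _ => hf i)
    (sum_le_sum_of_subset_of_nonneg hinter fun i _ _ => hf i)

section Sep

variable [Fintype V] {G : SimpleGraph V} {w : V → ℝ} {S S' T : Set V}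

theorem finite_cutWeights (G : SimpleGraph V) (w : V → ℝ) (S T : Set V) :
    {x : ℝ | ∃ N : Finset V, IsCut G S T N ∧ x = ∑ v ∈ N, w v}.Finite :=
  (Set.finite_range fun N : Finset V => ∑ v ∈ N, w v).subset fun _ ⟨N, _, hx⟩ => ⟨N, hx.symm⟩

theorem sep_le_sum_of_isCut {N : Finset V} (h : IsCut G S T N) : sep G w S T ≤ ∑ v ∈ N, w v :=
  csInf_le (finite_cutWeights G w S T).bddBelow ⟨N, h, rfl⟩

theorem exists_isCut_sep_eq_sum (G : SimpleGraph V) (w : V → ℝ) (S T : Set V) :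
    ∃ N : Finset V, IsCut G S T N ∧ sep G w S T = ∑ v ∈ N, w v :=
  Set.Nonempty.csInf_mem (s := {x : ℝ | ∃ N : Finset V, IsCut G S T N ∧ x = ∑ v ∈ N, w v})
    ⟨_, univ, fun s _ _ _ p => ⟨s, p.start_mem_support, mem_univ s⟩, rfl⟩
      (finite_cutWeights G w S T)

theorem sep_mono (h : S ⊆ S') : sep G w S T ≤ sep G w S' T := by
  obtain ⟨N, hN, hsep⟩ := exists_isCut_sep_eq_sum G w S' T
  exact hsep ▸ sep_le_sum_of_isCut (hN.anti_left h)

theorem sep_union_add_sep_inter_le (hw : ∀ u, 0 ≤ w u) (X Y : Set V) (t : V) :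
    sep G w (X ∪ Y) {t} + sep G w (X ∩ Y) {t} ≤ sep G w X {t} + sep G w Y {t} := by
  classical
  obtain ⟨A, hA, hAsep⟩ := exists_isCut_sep_eq_sum G w X {t}
  obtain ⟨B, hB, hBsep⟩ := exists_isCut_sep_eq_sum G w Y {t}
  let C := A.filter (· ∉ interiorSet G t B) ∪ B.filter (· ∉ interiorSet G t A)
  let D := A.filter (· ∈ hullSet G t B) ∪ B.filter (· ∈ hullSet G t A)
  have hC : IsCut G (X ∪ Y) {t} C :=
    (isCut_hullSet_union.anti_left
      (Set.union_subset_union hA.subset_hullSet hB.subset_hullSet)).mono_right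
        fun u hu => by simpa [C] using hu
  have hD : IsCut G (X ∩ Y) {t} D :=
    (isCut_hullSet_inter.anti_left
      (Set.inter_subset_inter hA.subset_hullSet hB.subset_hullSet)).mono_right
        fun u hu => by simpa [D] using hu
  have hweight : ∑ u ∈ C, w u + ∑ u ∈ D, w u ≤ ∑ u ∈ A, w u + ∑ u ∈ B, w u := by
    refine sum_add_sum_le_sum_add_sum hw (fun u => ?_) fun u => ?_ <;>
      simp only [C, D, hullSet, mem_union, mem_inter, mem_filter, Set.mem_union, mem_coe] <;>
      tauto
  linarith [sep_le_sum_of_isCut (w := w) hC, sep_le_sum_of_isCut (w := w) hD]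

end Sep

theorem delta_antitone [Fintype V] (G : SimpleGraph V) (w : V → ℝ) (hw : ∀ u, 0 ≤ w u)
    (S S' : Set V) (hSS' : S ⊆ S') (v t : V) :
    delta G w S' v t ≤ delta G w S v t := by
  have hsub := sep_union_add_sep_inter_le (G := G) hw (S ∪ {v}) S' t
  have hunion : S ∪ {v} ∪ S' = S' ∪ {v} := by
    rw [Set.union_right_comm, Set.union_eq_right.2 hSS']
  have hmono : sep G w S {t} ≤ sep G w ((S ∪ {v}) ∩ S') {t} :=
    sep_mono (Set.subset_inter Set.subset_union_left hSS')
  rw [hunion] at hsub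
  unfold delta
  linarith
end

section
/- Let G=(V,E) be a graph on the 3-SAT gadget instance: variables x_1,…,x_a, clauses c_1,…,c_b, and for a parameter m, vertices T and c_{i,j} (i ≤ b, j ≤ m) at position L, vertices x_i, x̄_i at position M, and F and e_{i,j} (i ≤ a, j ≤ m) at position R; edges connect T and F to every x_i and x̄_i, connect x_i and x̄_i to each e_{i,j}, and connect a literal vertex to c_{i,j} whenever the literal occurs in clause c_i. Distances: 0 within L, within M, and within R; 1 between M and L∪R; 2 between L and R. If the 3-SAT formula is satisfiable, then there exists a partition of the vertex set into two clusters, each inducing a connected subgraph of G and each containing its own center (T and F respectively), whose total k-median cost (sum over vertices of distance to their cluster's center) equals 2a. -/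
/-- Vertices of the 3-SAT gadget: `T` and clause copies `cl i j` at position `L`,
literal vertices `lit i p` (with `p = true` for `x_i`, `p = false` for `x̄_i`) at
position `M`, and `F` together with `e i j` at position `R`. -/
inductive GV (a b m : ℕ) where
  | T : GV a b m
  | F : GV a b m
  | cl : Fin b → Fin m → GV a b m
  | lit : Fin a → Bool → GV a b m
  | e : Fin a → Fin m → GV a b m
  deriving DecidableEq, Fintype

/-- Positions: `L = 0`, `M = 1`, `R = 2`. -/
def GV.pos {a b m : ℕ} : GV a b m → ℤ
  | .T => 0
  | .cl _ _ => 0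
  | .lit _ _ => 1
  | .e _ _ => 2
  | .F => 2

/-- The metric: distance `0` inside a position class, `1` between `M` and `L ∪ R`,
`2` between `L` and `R`. -/
def gdist {a b m : ℕ} (u v : GV a b m) : ℕ := (u.pos - v.pos).natAbs

/-- The edges of the gadget, as an (unsymmetrized) relation: `T` and `F` are joined
to every literal vertex, `lit i p` is joined to every `e i j`, and a literal vertex
is joined to `cl j j'` exactly if the literal occurs in clause `j`. -/
def gadgetRel {a b m : ℕ} (cls : Fin b → Finset (Fin a × Bool)) :
    GV a b m → GV a b m → Prop
  | .T, .lit _ _ => True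
  | .F, .lit _ _ => True
  | .lit i _, .e i' _ => i = i'
  | .lit i p, .cl j _ => (i, p) ∈ cls j
  | _, _ => False

/-- The connectivity graph of the gadget. -/
def gadgetGraph {a b m : ℕ} (cls : Fin b → Finset (Fin a × Bool)) :
    SimpleGraph (GV a b m) :=
  SimpleGraph.fromRel (gadgetRel cls)

/-!
Put `T`, every clause copy and the literals made true by a satisfying assignment `α` into the
cluster of `T`, everything else into that of `F`. Both clusters are connected: every literal
vertex is adjacent to both `T` and `F`, each clause copy to a literal satisfying its clause, and
each `e i j` to the false literal of `x_i`. Every vertex except the `2a` literal vertices lies at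
the position of its center, and a literal vertex is at distance `1` from either center.
-/

open Finset

namespace SimpleGraph

variable {V : Type*} {G : SimpleGraph V} {s : Set V}

lemma induce_reachable_of_adj {u v : V} (hu : u ∈ s) (hv : v ∈ s) (h : G.Adj u v) :
    (G.induce s).Reachable ⟨u, hu⟩ ⟨v, hv⟩ :=
  Adj.reachable (induce_adj.mpr h)

end SimpleGraph

namespace GV

variable {a b m : ℕ}

def isLit : GV a b m → Bool
  | .lit _ _ => true
  | _ => false

lemma card_filter_isLit : #{v : GV a b m | v.isLit} = 2 * a := by
  have hlits : ({v | v.isLit} : Finset (GV a b m)) =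
      univ.image fun x : Fin a × Bool => lit x.1 x.2 := by
    ext v
    simp only [mem_filter, mem_univ, true_and, mem_image]
    cases v <;> simp [isLit]
  rw [hlits, card_image_of_injective _ fun x y hxy => by cases x; cases y; simpa using hxy]
  simp [mul_comm]

end GV

section

variable {a b m : ℕ} (cls : Fin b → Finset (Fin a × Bool))

lemma gadgetGraph_adj_of_gadgetRel {u v : GV a b m} (hne : u ≠ v) (h : gadgetRel cls u v) :
    (gadgetGraph cls).Adj u v :=
  (SimpleGraph.fromRel_adj _ u v).mpr ⟨hne, Or.inl h⟩

lemma gadgetGraph_adj_T_lit (i : Fin a) (p : Bool) :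
    (gadgetGraph cls).Adj (GV.T : GV a b m) (GV.lit i p) :=
  gadgetGraph_adj_of_gadgetRel cls (by simp) trivial

lemma gadgetGraph_adj_F_lit (i : Fin a) (p : Bool) :
    (gadgetGraph cls).Adj (GV.F : GV a b m) (GV.lit i p) :=
  gadgetGraph_adj_of_gadgetRel cls (by simp) trivial

lemma gadgetGraph_adj_lit_cl {i : Fin a} {p : Bool} {j : Fin b} (h : (i, p) ∈ cls j) (k : Fin m) :
    (gadgetGraph cls).Adj (GV.lit i p) (GV.cl j k) :=
  gadgetGraph_adj_of_gadgetRel cls (by simp) h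

lemma gadgetGraph_adj_lit_e (i : Fin a) (p : Bool) (k : Fin m) :
    (gadgetGraph cls).Adj (GV.lit i p : GV a b m) (GV.e i k) :=
  gadgetGraph_adj_of_gadgetRel cls (by simp) rfl

def satCluster (α : Fin a → Bool) : GV a b m → Bool
  | .T => true
  | .cl _ _ => true
  | .lit i p => α i == p
  | .F => false
  | .e _ _ => false

lemma gdist_satCluster (α : Fin a → Bool) (v : GV a b m) :
    gdist v (if satCluster α v then GV.T else GV.F) = if v.isLit then 1 else 0 := by
  cases v with
  | lit i p => cases h : α i == p <;> simp [satCluster, h, gdist, GV.pos, GV.isLit]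
  | _ => rfl

lemma sum_gdist_satCluster (α : Fin a → Bool) :
    ∑ v : GV a b m, gdist v (if satCluster α v then GV.T else GV.F) = 2 * a := by
  simp only [gdist_satCluster, sum_boole, Nat.cast_id, GV.card_filter_isLit]

lemma satCluster_true_connected {α : Fin a → Bool} (hα : ∀ j, ∃ l ∈ cls j, α l.1 = l.2) :
    ((gadgetGraph cls).induce {v : GV a b m | satCluster α v = true}).Connected := by
  have hT : satCluster α (GV.T : GV a b m) = true := rfl
  have reach_lit (i : Fin a) (p : Bool) (hv : satCluster α (GV.lit i p : GV a b m) = true) :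
      ((gadgetGraph cls).induce {v | satCluster α v = true}).Reachable
        ⟨GV.T, hT⟩ ⟨GV.lit i p, hv⟩ :=
    SimpleGraph.induce_reachable_of_adj _ _ (gadgetGraph_adj_T_lit cls i p)
  refine (SimpleGraph.connected_iff_exists_forall_reachable _).mpr ⟨⟨GV.T, hT⟩, ?_⟩
  rintro ⟨v, hv⟩
  cases v with
  | T => rfl
  | lit i p => exact reach_lit i p hv
  | cl j k =>
    obtain ⟨⟨i, p⟩, hmem, hip⟩ := hα j
    have hlit : satCluster α (GV.lit i p : GV a b m) = true := by simp [satCluster, hip]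
    exact (reach_lit i p hlit).trans <|
      SimpleGraph.induce_reachable_of_adj _ _ (gadgetGraph_adj_lit_cl cls hmem k)
  | F | e _ _ => cases hv

lemma satCluster_false_connected (α : Fin a → Bool) :
    ((gadgetGraph cls).induce {v : GV a b m | satCluster α v = false}).Connected := by
  have hF : satCluster α (GV.F : GV a b m) = false := rfl
  have reach_lit (i : Fin a) (p : Bool) (hv : satCluster α (GV.lit i p : GV a b m) = false) :
      ((gadgetGraph cls).induce {v | satCluster α v = false}).Reachable
        ⟨GV.F, hF⟩ ⟨GV.lit i p, hv⟩ :=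
    SimpleGraph.induce_reachable_of_adj _ _ (gadgetGraph_adj_F_lit cls i p)
  refine (SimpleGraph.connected_iff_exists_forall_reachable _).mpr ⟨⟨GV.F, hF⟩, ?_⟩
  rintro ⟨v, hv⟩
  cases v with
  | F => rfl
  | lit i p => exact reach_lit i p hv
  | e i k =>
    have hlit : satCluster α (GV.lit i !(α i) : GV a b m) = false := by simp [satCluster]
    exact (reach_lit i _ hlit).trans <|
      SimpleGraph.induce_reachable_of_adj _ _ (gadgetGraph_adj_lit_e cls i _ k)
  | T | cl _ _ => cases hv

end

/-- If the 3-SAT instance (clause `j` is satisfied by `α` iff some literal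
`(i, p) ∈ cls j` has `α i = p`) is satisfiable, then there is a partition of the
gadget vertices into two connected clusters with centers `T` and `F` of total
`2`-median cost exactly `2a`. -/
theorem satisfiable_implies_cheap_solution (a b m : ℕ)
    (cls : Fin b → Finset (Fin a × Bool))
    (hsat : ∃ α : Fin a → Bool, ∀ j : Fin b, ∃ l ∈ cls j, α l.1 = l.2) :
    ∃ assign : GV a b m → Bool,
      assign GV.T = true ∧ assign GV.F = false ∧
      ((gadgetGraph cls).induce {v : GV a b m | assign v = true}).Connected ∧
      ((gadgetGraph cls).induce {v : GV a b m | assign v = false}).Connected ∧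
      (∑ v : GV a b m, gdist v (if assign v then GV.T else GV.F)) = 2 * a := by
  obtain ⟨α, hα⟩ := hsat
  exact ⟨satCluster α, rfl, rfl, satCluster_true_connected cls hα,
    satCluster_false_connected cls α, sum_gdist_satCluster α⟩
end

section
/- In the same 3-SAT gadget instance with a, b ≥ 2: if every partition of the vertices into two connected clusters (each containing its center) has cost at least 2m whenever the formula is unsatisfiable; equivalently, if there exists a connected 2-median solution of cost strictly less than 2m, then the 3-SAT formula is satisfiable. -/
/-! If neither center lay at position `L`, each of the `b * m ≥ 2 * m` clause copies would cost
at least `1`; likewise at `R` with the `a * m ≥ 2 * m` vertices `e i j`. So one cluster `A` is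
centered at `L` and the other, `B`, at `R`. Then every literal vertex costs `1`, and every clause
copy in `B` and every `e i j` in `A` costs `2`, so the bound `< 2 * m` leaves, for each clause `j`,
two copies `cl j ·` in `A`, and for each variable `i`, two vertices `e i ·` in `B`. A connected
cluster with two vertices gives each of them a neighbour inside it: a literal of clause `j` in `A`,
and a literal of variable `i` in `B`. Making the literals in `A` true is therefore a consistent
satisfying assignment. -/

open Finset

theorem SimpleGraph.Connected.exists_adj_mem_of_induce {V : Type*} {G : SimpleGraph V}
    {s : Set V} (h : (G.induce s).Connected) {u w : V} (hu : u ∈ s) (hw : w ∈ s)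
    (hne : u ≠ w) : ∃ x ∈ s, G.Adj u x := by
  have : Nontrivial s := nontrivial_of_ne ⟨u, hu⟩ ⟨w, hw⟩ (by simpa using hne)
  obtain ⟨x, hx⟩ := h.preconnected.exists_adj_of_nontrivial ⟨u, hu⟩
  exact ⟨x, x.2, hx⟩

theorem exists_ne_of_card_filter_not_add_two_le {ι : Type*} [Fintype ι] (p : ι → Prop)
    [DecidablePred p] (h : #{i | ¬ p i} + 2 ≤ Fintype.card ι) :
    ∃ i₁ i₂, i₁ ≠ i₂ ∧ p i₁ ∧ p i₂ := by
  have hsplit := card_filter_add_card_filter_not (s := univ) (fun i => p i)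
  obtain ⟨i₁, h₁, i₂, h₂, hne⟩ := one_lt_card.mp (show 1 < #{i | p i} by
    rw [card_univ] at hsplit; omega)
  exact ⟨i₁, i₂, hne, (mem_filter.mp h₁).2, (mem_filter.mp h₂).2⟩

theorem exists_satisfying_assignment_of_consistent_hitting_set {ι κ : Type*}
    (cls : κ → Finset (ι × Bool)) (S : Set (ι × Bool)) (hcons : ∀ i, ∃ p, (i, p) ∉ S)
    (hhit : ∀ j, ∃ l ∈ cls j, l ∈ S) :
    ∃ α : ι → Bool, ∀ j, ∃ l ∈ cls j, α l.1 = l.2 := by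
  classical
  refine ⟨fun i => decide ((i, true) ∈ S), fun j => ?_⟩
  obtain ⟨⟨i, p⟩, hl, hS⟩ := hhit j
  refine ⟨(i, p), hl, ?_⟩
  obtain ⟨q, hq⟩ := hcons i
  cases p <;> cases q <;> simp_all

theorem gadgetGraph_adj_e_iff {a b m : ℕ} {cls : Fin b → Finset (Fin a × Bool)} {i : Fin a}
    {j : Fin m} {v : GV a b m} : (gadgetGraph cls).Adj (.e i j) v ↔ ∃ p, v = .lit i p := by
  cases v <;> simp [gadgetGraph, gadgetRel, eq_comm]

theorem gadgetGraph_adj_cl_iff {a b m : ℕ} {cls : Fin b → Finset (Fin a × Bool)} {j : Fin b}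
    {j' : Fin m} {v : GV a b m} :
    (gadgetGraph cls).Adj (.cl j j') v ↔ ∃ l ∈ cls j, v = .lit l.1 l.2 := by
  cases v <;> simp [gadgetGraph, gadgetRel]

theorem one_le_gdist {a b m : ℕ} {u v : GV a b m} (h : u.pos ≠ v.pos) : 1 ≤ gdist u v :=
  Int.natAbs_pos.mpr (sub_ne_zero.mpr h)

namespace GV

variable {a b m : ℕ}

def equivSum :
    GV a b m ≃ Unit ⊕ Unit ⊕ (Fin b × Fin m) ⊕ (Fin a × Bool) ⊕ (Fin a × Fin m) where
  toFun
    | T => .inl ()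
    | F => .inr (.inl ())
    | cl j j' => .inr (.inr (.inl (j, j')))
    | lit i p => .inr (.inr (.inr (.inl (i, p))))
    | e i j => .inr (.inr (.inr (.inr (i, j))))
  invFun
    | .inl _ => T
    | .inr (.inl _) => F
    | .inr (.inr (.inl (j, j'))) => cl j j'
    | .inr (.inr (.inr (.inl (i, p)))) => lit i p
    | .inr (.inr (.inr (.inr (i, j)))) => e i j
  left_inv v := by cases v <;> rfl
  right_inv x := by rcases x with _ | _ | _ | _ | _ <;> rfl

theorem sum_univ {M : Type*} [AddCommMonoid M] (f : GV a b m → M) :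
    ∑ v, f v = f T + f F + ∑ j, ∑ j', f (cl j j') + ∑ i, ∑ p, f (lit i p) +
      ∑ i, ∑ j, f (e i j) := by
  rw [← equivSum.symm.sum_comp]
  simp only [Fintype.sum_sum_type, Fintype.sum_prod_type, Fintype.sum_unique]
  simp only [add_assoc]
  rfl

def medianCost (g : GV a b m → Bool) (c₁ c₂ : GV a b m) : ℕ :=
  ∑ v, gdist v (if g v then c₁ else c₂)

theorem medianCost_not (g : GV a b m → Bool) (c₁ c₂ : GV a b m) :
    medianCost (fun v => !g v) c₂ c₁ = medianCost g c₁ c₂ := by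
  refine sum_congr rfl fun v _ => ?_
  cases h : g v <;> simp [h]

theorem pos_eq_zero_or_of_medianCost_lt (hb : 2 ≤ b) {g : GV a b m → Bool}
    {c₁ c₂ : GV a b m}
    (hcost : medianCost g c₁ c₂ < 2 * m) : c₁.pos = 0 ∨ c₂.pos = 0 := by
  by_contra! ⟨h₁, h₂⟩
  have hcl : ∀ j j', 1 ≤ gdist (cl j j' : GV a b m) (if g (cl j j') then c₁ else c₂) := by
    intro j j'
    apply one_le_gdist
    split <;> [exact h₁.symm; exact h₂.symm]
  have hsum :
      b * m ≤ ∑ j, ∑ j', gdist (cl j j' : GV a b m) (if g (cl j j') then c₁ else c₂) :=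
    calc b * m = ∑ _j : Fin b, ∑ _j' : Fin m, 1 := by simp
      _ ≤ _ := sum_le_sum fun j _ => sum_le_sum fun j' _ => hcl j j'
  have := sum_univ fun v => gdist v (if g v then c₁ else c₂)
  have := Nat.mul_le_mul_right m hb
  unfold medianCost at hcost
  omega

theorem pos_eq_two_or_of_medianCost_lt (ha : 2 ≤ a) {g : GV a b m → Bool}
    {c₁ c₂ : GV a b m}
    (hcost : medianCost g c₁ c₂ < 2 * m) : c₁.pos = 2 ∨ c₂.pos = 2 := by
  by_contra! ⟨h₁, h₂⟩
  have he : ∀ i j, 1 ≤ gdist (e i j : GV a b m) (if g (e i j) then c₁ else c₂) := by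
    intro i j
    apply one_le_gdist
    split <;> [exact h₁.symm; exact h₂.symm]
  have hsum : a * m ≤ ∑ i, ∑ j, gdist (e i j : GV a b m) (if g (e i j) then c₁ else c₂) :=
    calc a * m = ∑ _i : Fin a, ∑ _j : Fin m, 1 := by simp
      _ ≤ _ := sum_le_sum fun i _ => sum_le_sum fun j _ => he i j
  have := sum_univ fun v => gdist v (if g v then c₁ else c₂)
  have := Nat.mul_le_mul_right m ha
  unfold medianCost at hcost
  omega

section Centered

variable {g : GV a b m → Bool} {cA cB : GV a b m}

theorem gdist_ite (hA : cA.pos = 0) (hB : cB.pos = 2) (v : GV a b m) :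
    gdist v (if g v then cA else cB) = (v.pos - if g v then 0 else 2).natAbs := by
  unfold gdist
  split <;> simp only [hA, hB]

theorem sum_gdist_lit (hA : cA.pos = 0) (hB : cB.pos = 2) :
    ∑ i, ∑ p, gdist (lit i p : GV a b m) (if g (lit i p) then cA else cB) = 2 * a := by
  have hone : ∀ i p, gdist (lit i p : GV a b m) (if g (lit i p) then cA else cB) = 1 := by
    intro i p
    rw [gdist_ite hA hB]
    split <;> rfl
  simp [hone, mul_comm]

theorem two_mul_card_cl_add_le_medianCost (hA : cA.pos = 0) (hB : cB.pos = 2) (j : Fin b) :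
    2 * #{j' | g (cl j j') = false} + 2 * a ≤ medianCost g cA cB := by
  have hcl : ∑ j', gdist (cl j j' : GV a b m) (if g (cl j j') then cA else cB) =
      2 * #{j' | g (cl j j') = false} := by
    rw [card_filter, mul_sum]
    refine sum_congr rfl fun j' _ => ?_
    rw [gdist_ite hA hB]
    cases g (cl j j') <;> rfl
  have := single_le_sum (fun j _ => Nat.zero_le _) (mem_univ j)
    (f := fun j => ∑ j', gdist (cl j j' : GV a b m) (if g (cl j j') then cA else cB))
  have := sum_univ fun v => gdist v (if g v then cA else cB)
  have := sum_gdist_lit (g := g) hA hB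
  unfold medianCost
  omega

theorem two_mul_card_e_add_le_medianCost (hA : cA.pos = 0) (hB : cB.pos = 2) (i : Fin a) :
    2 * #{j | g (e i j) = true} + 2 * a ≤ medianCost g cA cB := by
  have he : ∑ j, gdist (e i j : GV a b m) (if g (e i j) then cA else cB) =
      2 * #{j | g (e i j) = true} := by
    rw [card_filter, mul_sum]
    refine sum_congr rfl fun j _ => ?_
    rw [gdist_ite hA hB]
    cases g (e i j) <;> rfl
  have := single_le_sum (fun i _ => Nat.zero_le _) (mem_univ i)
    (f := fun i => ∑ j, gdist (e i j : GV a b m) (if g (e i j) then cA else cB))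
  have := sum_univ fun v => gdist v (if g v then cA else cB)
  have := sum_gdist_lit (g := g) hA hB
  unfold medianCost
  omega

variable {cls : Fin b → Finset (Fin a × Bool)}

theorem exists_lit_eq_false_of_medianCost_lt (hA : cA.pos = 0) (hB : cB.pos = 2)
    (hconB : ((gadgetGraph cls).induce {v | g v = false}).Connected)
    (hcost : medianCost g cA cB < 2 * m) (i : Fin a) : ∃ p, g (lit i p) = false := by
  have hcard := two_mul_card_e_add_le_medianCost (g := g) hA hB i
  obtain ⟨j₁, j₂, hne, h₁, h₂⟩ := exists_ne_of_card_filter_not_add_two_le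
    (fun j => g (e i j) = false) (by
      simp only [Bool.not_eq_false, Fintype.card_fin]
      have := i.pos
      omega)
  obtain ⟨v, hv, hadj⟩ := hconB.exists_adj_mem_of_induce h₁ h₂ (by simpa using hne)
  obtain ⟨p, rfl⟩ := gadgetGraph_adj_e_iff.mp hadj
  exact ⟨p, hv⟩

theorem exists_lit_mem_clause_of_medianCost_lt (ha : 0 < a) (hA : cA.pos = 0)
    (hB : cB.pos = 2) (hconA : ((gadgetGraph cls).induce {v | g v = true}).Connected)
    (hcost : medianCost g cA cB < 2 * m) (j : Fin b) :
    ∃ l ∈ cls j, g (lit l.1 l.2) = true := by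
  have hcard := two_mul_card_cl_add_le_medianCost (g := g) hA hB j
  obtain ⟨j₁, j₂, hne, h₁, h₂⟩ := exists_ne_of_card_filter_not_add_two_le
    (fun j' => g (cl j j') = true) (by
      simp only [Bool.not_eq_true, Fintype.card_fin]
      omega)
  obtain ⟨v, hv, hadj⟩ := hconA.exists_adj_mem_of_induce h₁ h₂ (by simpa using hne)
  obtain ⟨l, hl, rfl⟩ := gadgetGraph_adj_cl_iff.mp hadj
  exact ⟨l, hl, hv⟩

theorem satisfiable_of_medianCost_lt (ha : 0 < a) (hA : cA.pos = 0) (hB : cB.pos = 2)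
    (hconA : ((gadgetGraph cls).induce {v | g v = true}).Connected)
    (hconB : ((gadgetGraph cls).induce {v | g v = false}).Connected)
    (hcost : medianCost g cA cB < 2 * m) :
    ∃ α : Fin a → Bool, ∀ j, ∃ l ∈ cls j, α l.1 = l.2 :=
  exists_satisfying_assignment_of_consistent_hitting_set cls {l | g (lit l.1 l.2) = true}
    (fun i => by simpa using exists_lit_eq_false_of_medianCost_lt hA hB hconB hcost i)
    (exists_lit_mem_clause_of_medianCost_lt ha hA hB hconA hcost)

end Centered

end GV

/-- If, for `a, b ≥ 2`, there is a feasible connected `2`-median solution on the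
gadget (a partition into two connected clusters, each containing its designated
center) of cost strictly less than `2m`, then the 3-SAT formula is satisfiable. -/
theorem cheap_solution_implies_satisfiable (a b m : ℕ) (ha : 2 ≤ a) (hb : 2 ≤ b)
    (cls : Fin b → Finset (Fin a × Bool))
    (h : ∃ (assign : GV a b m → Bool) (c₁ c₂ : GV a b m),
      assign c₁ = true ∧ assign c₂ = false ∧
      ((gadgetGraph cls).induce {v : GV a b m | assign v = true}).Connected ∧
      ((gadgetGraph cls).induce {v : GV a b m | assign v = false}).Connected ∧
      (∑ v : GV a b m, gdist v (if assign v then c₁ else c₂)) < 2 * m) :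
    ∃ α : Fin a → Bool, ∀ j : Fin b, ∃ l ∈ cls j, α l.1 = l.2 := by
  obtain ⟨g, c₁, c₂, -, -, hconT, hconF, hcost⟩ := h
  change GV.medianCost g c₁ c₂ < 2 * m at hcost
  rcases GV.pos_eq_zero_or_of_medianCost_lt hb hcost with h₀ | h₀ <;>
    rcases GV.pos_eq_two_or_of_medianCost_lt ha hcost with h₂ | h₂
  · exact absurd (h₀.symm.trans h₂) (by decide)
  · exact GV.satisfiable_of_medianCost_lt (by omega) h₀ h₂ hconT hconF hcost
  · have hnot : ∀ t, {v | (!g v) = t} = {v | g v = !t} := fun _ =>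
      Set.ext fun _ => Bool.not_eq_eq_eq_not
    rw [← GV.medianCost_not] at hcost
    exact GV.satisfiable_of_medianCost_lt (by omega) h₀ h₂ (by rw [hnot]; exact hconF)
      (by rw [hnot]; exact hconT) hcost
  · exact absurd (h₀.symm.trans h₂) (by decide)
end

section
/- Let G=(V,E) be a graph constructed from a graph H=(W,F) with W = {v_1,…,v_n} as follows: V = {a, b, x_1,…,x_n, y_1,…,y_n}; for each i, edges {x_i,a}, {x_i,b}, {x_i,y_i}; and for each edge {v_i,v_j} ∈ F, edges {x_i,y_j} and {x_j,y_i}. Place a and all x_i at coordinate 0 and b and all y_i at coordinate 1 (so distances are 0 or 1). If H has a dominating set of size s, then there exist two (possibly overlapping) clusters covering V, each inducing a connected subgraph of G, with centers a and b respectively, of total cost s (cost = sum over cluster memberships of the distance to the center). -/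
/-- Vertices of the dominating-set gadget: `a` and the `x i` at position `0`,
`b` and the `y i` at position `1`. -/
inductive DV (n : ℕ) where
  | a : DV n
  | b : DV n
  | x : Fin n → DV n
  | y : Fin n → DV n
  deriving DecidableEq, Fintype

def DV.pos {n : ℕ} : DV n → ℕ
  | .a => 0
  | .x _ => 0
  | .b => 1
  | .y _ => 1

/-- Distance `0` between vertices at the same position, `1` otherwise. -/
def ddist {n : ℕ} (u v : DV n) : ℕ := if u.pos = v.pos then 0 else 1

/-- Edges of the gadget (unsymmetrized): `x i` is joined to `a`, to `b`, to `y i`,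
and to `y j` whenever `{v_i, v_j}` is an edge of `H`. -/
def domRel {n : ℕ} (H : SimpleGraph (Fin n)) : DV n → DV n → Prop
  | .x _, .a => True
  | .x _, .b => True
  | .x i, .y j => i = j ∨ H.Adj i j
  | _, _ => False

/-- The connectivity graph of the dominating-set gadget. -/
def domGraph {n : ℕ} (H : SimpleGraph (Fin n)) : SimpleGraph (DV n) :=
  SimpleGraph.fromRel (domRel H)

/-! Put `a` and every `x i` in the cluster of `a`, at cost `0`. The cluster of `b` takes `b`, every
`y i`, and `x j` for `j ∈ S`; only the latter cost `1` each. Each `y i` reaches `b` through `x j`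
for a `j ∈ S` dominating `i`, so both clusters are stars of radius at most two. -/

open Finset

namespace SimpleGraph

variable {V : Type*} {G : SimpleGraph V}

theorem connected_induce_of_forall_adj_or_adj_adj {s : Set V} {c : V} (hc : c ∈ s)
    (h : ∀ v ∈ s, v = c ∨ G.Adj v c ∨ ∃ w ∈ s, G.Adj v w ∧ G.Adj w c) :
    (G.induce s).Connected := by
  refine connected_iff_exists_forall_reachable _ |>.2 ⟨⟨c, hc⟩, fun ⟨v, hv⟩ => ?_⟩
  refine Reachable.symm ?_
  rcases h v hv with rfl | hvc | ⟨w, hw, hvw, hwc⟩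
  · rfl
  · exact Adj.reachable (G := G.induce s) (u := ⟨v, hv⟩) (v := ⟨c, hc⟩) hvc
  · exact (Adj.reachable (G := G.induce s) (u := ⟨v, hv⟩) (v := ⟨w, hw⟩) hvw).trans
      (Adj.reachable (G := G.induce s) (v := ⟨c, hc⟩) hwc)

end SimpleGraph

namespace DV

variable {n : ℕ}

theorem sum_ddist_eq_card_filter (T : Finset (DV n)) (c : DV n) :
    ∑ v ∈ T, ddist v c = #{v ∈ T | v.pos ≠ c.pos} := by
  simp only [ddist, card_filter, ite_not]

variable {H : SimpleGraph (Fin n)}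

theorem domGraph_adj_x_a (i : Fin n) : (domGraph H).Adj (x i) a := by
  simp [domGraph, domRel]

theorem domGraph_adj_x_b (i : Fin n) : (domGraph H).Adj (x i) b := by
  simp [domGraph, domRel]

theorem domGraph_adj_y_x {i j : Fin n} (h : j = i ∨ H.Adj j i) : (domGraph H).Adj (y i) (x j) := by
  simpa [domGraph, domRel] using h

end DV

open DV

def clusterA (n : ℕ) : Finset (DV n) := {v | v.pos = 0}

def clusterB {n : ℕ} (S : Finset (Fin n)) : Finset (DV n) :=
  insert b (S.image x ∪ univ.image y)

@[simp] theorem mem_clusterA {n : ℕ} {v : DV n} : v ∈ clusterA n ↔ v.pos = 0 := by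
  simp [clusterA]

@[simp] theorem mem_clusterB {n : ℕ} {S : Finset (Fin n)} {v : DV n} :
    v ∈ clusterB S ↔ v = b ∨ (∃ i ∈ S, x i = v) ∨ ∃ i, y i = v := by
  simp [clusterB]

theorem clusterA_union_clusterB {n : ℕ} (S : Finset (Fin n)) :
    (↑(clusterA n) ∪ ↑(clusterB S) : Set (DV n)) = Set.univ := by
  ext v
  cases v <;> simp [DV.pos]

theorem sum_ddist_clusterA (n : ℕ) : ∑ v ∈ clusterA n, ddist v a = 0 := by
  rw [sum_ddist_eq_card_filter, card_eq_zero, filter_eq_empty_iff]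
  intro v hv
  simpa [DV.pos] using mem_clusterA.1 hv

theorem sum_ddist_clusterB {n : ℕ} (S : Finset (Fin n)) :
    ∑ v ∈ clusterB S, ddist v b = #S := by
  have hfilter : {v ∈ clusterB S | v.pos ≠ (b : DV n).pos} = S.image x := by
    ext v
    rw [mem_filter, mem_clusterB, mem_image]
    cases v <;> simp [DV.pos]
  rw [sum_ddist_eq_card_filter, hfilter, card_image_of_injective _ fun _ _ => x.inj]

theorem connected_induce_clusterA {n : ℕ} (H : SimpleGraph (Fin n)) :
    ((domGraph H).induce (clusterA n : Set (DV n))).Connected := by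
  refine SimpleGraph.connected_induce_of_forall_adj_or_adj_adj (c := a) (by simp [DV.pos]) ?_
  rintro (_ | _ | i | i) hv <;> simp_all [DV.pos, domGraph_adj_x_a]

theorem connected_induce_clusterB {n : ℕ} {H : SimpleGraph (Fin n)} {S : Finset (Fin n)}
    (hdom : ∀ i : Fin n, i ∈ S ∨ ∃ j ∈ S, H.Adj i j) :
    ((domGraph H).induce (clusterB S : Set (DV n))).Connected := by
  refine SimpleGraph.connected_induce_of_forall_adj_or_adj_adj (c := b) (by simp) ?_
  rintro (_ | _ | i | i) hv
  · simp at hv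
  · exact .inl rfl
  · exact .inr (.inl (domGraph_adj_x_b i))
  · obtain ⟨j, hjS, hji⟩ : ∃ j ∈ S, j = i ∨ H.Adj j i := by
      rcases hdom i with hi | ⟨j, hj, hij⟩
      exacts [⟨i, hi, .inl rfl⟩, ⟨j, hj, .inr hij.symm⟩]
    exact .inr (.inr ⟨x j, by simpa using hjS, domGraph_adj_y_x hji, domGraph_adj_x_b j⟩)

/-- If `H` has a dominating set of size `s`, then there are two (possibly
overlapping) clusters covering all gadget vertices, each inducing a connected
subgraph and containing its center (`a`, resp. `b`), of total cost `s`. -/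
theorem dominatingSet_implies_solution (n : ℕ) (H : SimpleGraph (Fin n))
    (S : Finset (Fin n)) (hdom : ∀ i : Fin n, i ∈ S ∨ ∃ j ∈ S, H.Adj i j)
    (s : ℕ) (hcard : S.card = s) :
    ∃ Va Vb : Finset (DV n),
      (↑Va ∪ ↑Vb : Set (DV n)) = Set.univ ∧
      DV.a ∈ Va ∧ DV.b ∈ Vb ∧
      ((domGraph H).induce (↑Va : Set (DV n))).Connected ∧
      ((domGraph H).induce (↑Vb : Set (DV n))).Connected ∧
      (∑ v ∈ Va, ddist v DV.a) + (∑ v ∈ Vb, ddist v DV.b) = s := by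
  refine ⟨clusterA n, clusterB S, clusterA_union_clusterB S, by simp [DV.pos], by simp,
    connected_induce_clusterA H, connected_induce_clusterB hdom, ?_⟩
  rw [sum_ddist_clusterA, sum_ddist_clusterB, zero_add, hcard]
end

section
/- In the dominating-set gadget graph G with centers a and b (as constructed: a,b,x_1,…,x_n,y_1,…,y_n with edges {x_i,a}, {x_i,b}, {x_i,y_i}, and {x_i,y_j},{x_j,y_i} for edges {v_i,v_j} of H; positions 0 for a,x_i and 1 for b,y_i): if there exists a feasible non-disjoint connected 2-median solution of cost s < n, then H has a dominating set of size at most s. -/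
/-!
If both centers lie at the same position, every vertex at the other position (`n + 1` of them)
costs `1`, so the cost is at least `n + 1`. Otherwise, say `c₁` is at position `0` and `c₂` at
position `1`; take `S = {i | y i ∈ V₁ ∨ x i ∈ V₂}`, which injects into the vertices of cost `1`
(`i ↦ y i` or `x i`), so `#S ≤ s`. A vertex `y i ∉ V₁` lies in `V₂`; unless `V₂ = {y i}`
(which again forces cost `≥ n`), connectivity of `V₂` gives a neighbour `x j ∈ V₂` of `y i`,
and then `j ∈ S` with `j = i` or `j` adjacent to `i` in `H`.
-/

open Finset

lemma SimpleGraph.exists_mem_adj_of_connected_induce {V : Type*} {G : SimpleGraph V} {s : Set V}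
    (h : (G.induce s).Connected) (hs : s.Nontrivial) {v : V} (hv : v ∈ s) :
    ∃ u ∈ s, G.Adj v u := by
  have : Nontrivial s := Set.nontrivial_coe_sort.mpr hs
  obtain ⟨u, hu⟩ := h.preconnected.exists_adj_of_nontrivial ⟨v, hv⟩
  exact ⟨u, u.2, hu⟩

namespace DV

variable {n : ℕ}

lemma pos_eq_zero_or_one (v : DV n) : v.pos = 0 ∨ v.pos = 1 := by
  cases v <;> simp [DV.pos]

lemma x_injective : Function.Injective (x : Fin n → DV n) := fun _ _ => x.inj

lemma y_injective : Function.Injective (y : Fin n → DV n) := fun _ _ => y.inj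

lemma succ_le_card_pos_ne (v : DV n) : n + 1 ≤ #(univ.filter fun u : DV n => u.pos ≠ v.pos) := by
  have key : ∀ (w : DV n) (f : Fin n ↪ DV n), (∀ i, f i ≠ w) → w.pos ≠ v.pos →
      (∀ i, (f i).pos ≠ v.pos) → n + 1 ≤ #(univ.filter fun u : DV n => u.pos ≠ v.pos) :=
    fun w f hfw hw hf => calc
      n + 1 = #(insert w (univ.map f)) := by
        rw [card_insert_of_notMem (by simpa using hfw), card_map, card_univ, Fintype.card_fin]
      _ ≤ _ := card_le_card <| insert_subset (by simpa using hw) <| by simpa [subset_iff] using hf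
  cases v
  case a | x => exact key b ⟨y, y_injective⟩ (by simp) (by simp [pos]) (by simp [pos])
  case b | y => exact key a ⟨x, x_injective⟩ (by simp) (by simp [pos]) (by simp [pos])

lemma adj_y_iff {H : SimpleGraph (Fin n)} {i : Fin n} {u : DV n} :
    (domGraph H).Adj (y i) u ↔ ∃ j, u = x j ∧ (j = i ∨ H.Adj j i) := by
  cases u <;> simp [domGraph, domRel, eq_comm]

end DV

variable {n : ℕ}

def misplaced (V : Finset (DV n)) (c : DV n) : Finset (DV n) := {v ∈ V | v.pos ≠ c.pos}

lemma sum_ddist_eq_card_misplaced (V : Finset (DV n)) (c : DV n) :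
    ∑ v ∈ V, ddist v c = #(misplaced V c) := by
  rw [misplaced, card_filter]
  exact sum_congr rfl fun v _ => by unfold ddist; split_ifs <;> simp_all

variable {V₁ V₂ : Finset (DV n)} {c₁ c₂ : DV n}

lemma succ_le_card_misplaced_of_pos_eq (hcov : ∀ v, v ∈ V₁ ∨ v ∈ V₂) (hpos : c₁.pos = c₂.pos) :
    n + 1 ≤ #(misplaced V₁ c₁) + #(misplaced V₂ c₂) := calc
  n + 1 ≤ #(univ.filter fun u : DV n => u.pos ≠ c₁.pos) := c₁.succ_le_card_pos_ne
  _ ≤ #(misplaced V₁ c₁ ∪ misplaced V₂ c₂) := card_le_card fun u hu => by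
    have hu : u.pos ≠ c₁.pos := (mem_filter.1 hu).2
    rcases hcov u with hu₁ | hu₂
    · exact mem_union_left _ (mem_filter.2 ⟨hu₁, hu⟩)
    · exact mem_union_right _ (mem_filter.2 ⟨hu₂, hpos ▸ hu⟩)
  _ ≤ _ := card_union_le _ _

lemma le_card_misplaced_of_forall_ne_mem (w : DV n) (hV : ∀ v ≠ w, v ∈ V₁) (c : DV n) :
    n ≤ #(misplaced V₁ c) := calc
  n ≤ #(univ.filter fun u : DV n => u.pos ≠ c.pos) - 1 := by
    have := c.succ_le_card_pos_ne; omega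
  _ ≤ #((univ.filter fun u : DV n => u.pos ≠ c.pos).erase w) := pred_card_le_card_erase
  _ ≤ #(misplaced V₁ c) := card_le_card fun u hu => by
    obtain ⟨hne, hu⟩ := mem_erase.1 hu
    exact mem_filter.2 ⟨hV u hne, (mem_filter.1 hu).2⟩

/-- The dominating set read off from a solution whose cluster `V₁` is centred at position `0`
and `V₂` at position `1`. -/
def dominatingSetOf (V₁ V₂ : Finset (DV n)) : Finset (Fin n) := {i | DV.y i ∈ V₁ ∨ DV.x i ∈ V₂}

lemma card_dominatingSetOf_le (hp₁ : c₁.pos = 0) (hp₂ : c₂.pos = 1) :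
    #(dominatingSetOf V₁ V₂) ≤ #(misplaced V₁ c₁) + #(misplaced V₂ c₂) := by
  rw [dominatingSetOf, filter_or]
  refine (card_union_le _ _).trans (add_le_add ?_ ?_)
  · exact card_le_card_of_injOn DV.y
      (fun i hi => mem_filter.2 ⟨(mem_filter.1 hi).2, by rw [hp₁]; simp [DV.pos]⟩)
      DV.y_injective.injOn
  · exact card_le_card_of_injOn DV.x
      (fun i hi => mem_filter.2 ⟨(mem_filter.1 hi).2, by rw [hp₂]; simp [DV.pos]⟩)
      DV.x_injective.injOn

lemma mem_or_adj_dominatingSetOf {H : SimpleGraph (Fin n)} (hcov : ∀ v, v ∈ V₁ ∨ v ∈ V₂)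
    (hconn₂ : ((domGraph H).induce (↑V₂ : Set (DV n))).Connected)
    (hlt : #(misplaced V₁ c₁) < n) (i : Fin n) :
    i ∈ dominatingSetOf V₁ V₂ ∨ ∃ j ∈ dominatingSetOf V₁ V₂, H.Adj i j := by
  by_cases hy₁ : DV.y i ∈ V₁
  · exact Or.inl (by simp [dominatingSetOf, hy₁])
  have hy₂ : DV.y i ∈ V₂ := (hcov _).resolve_left hy₁
  obtain ⟨w, hw₂, hwy⟩ : ∃ w ∈ V₂, w ≠ DV.y i := by
    by_contra! h
    exact hlt.not_ge <| le_card_misplaced_of_forall_ne_mem (DV.y i)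
      (fun v hv => (hcov v).resolve_right (mt (h v) hv)) c₁
  obtain ⟨u, hu, hadj⟩ := (domGraph H).exists_mem_adj_of_connected_induce hconn₂
    ⟨_, mem_coe.2 hy₂, _, mem_coe.2 hw₂, hwy.symm⟩ (mem_coe.2 hy₂)
  obtain ⟨j, rfl, rfl | hji⟩ := DV.adj_y_iff.1 hadj
  · exact Or.inl (by simp_all [dominatingSetOf])
  · exact Or.inr ⟨j, by simp_all [dominatingSetOf], hji.symm⟩

lemma exists_dominatingSet_of_pos {H : SimpleGraph (Fin n)} (hcov : ∀ v, v ∈ V₁ ∨ v ∈ V₂)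
    (hconn₂ : ((domGraph H).induce (↑V₂ : Set (DV n))).Connected)
    (hp₁ : c₁.pos = 0) (hp₂ : c₂.pos = 1) (hlt : #(misplaced V₁ c₁) + #(misplaced V₂ c₂) < n) :
    ∃ S : Finset (Fin n), (∀ i, i ∈ S ∨ ∃ j ∈ S, H.Adj i j) ∧
      #S ≤ #(misplaced V₁ c₁) + #(misplaced V₂ c₂) :=
  ⟨dominatingSetOf V₁ V₂, mem_or_adj_dominatingSetOf (c₁ := c₁) hcov hconn₂ (by omega),
    card_dominatingSetOf_le hp₁ hp₂⟩

theorem solution_implies_dominatingSet_general (n : ℕ) (H : SimpleGraph (Fin n))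
    (V₁ V₂ : Finset (DV n)) (c₁ c₂ : DV n)
    (hcover : (↑V₁ ∪ ↑V₂ : Set (DV n)) = Set.univ)
    (hconn₁ : ((domGraph H).induce (↑V₁ : Set (DV n))).Connected)
    (hconn₂ : ((domGraph H).induce (↑V₂ : Set (DV n))).Connected)
    (s : ℕ) (hcost : (∑ v ∈ V₁, ddist v c₁) + (∑ v ∈ V₂, ddist v c₂) = s)
    (hs : s < n) :
    ∃ S : Finset (Fin n), (∀ i : Fin n, i ∈ S ∨ ∃ j ∈ S, H.Adj i j) ∧ S.card ≤ s := by
  have hcov : ∀ v, v ∈ V₁ ∨ v ∈ V₂ := fun v => by simpa using Set.eq_univ_iff_forall.1 hcover v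
  rw [sum_ddist_eq_card_misplaced, sum_ddist_eq_card_misplaced] at hcost
  subst hcost
  by_cases hpos : c₁.pos = c₂.pos
  · exact absurd (succ_le_card_misplaced_of_pos_eq hcov hpos) (by omega)
  have hp₂ := c₂.pos_eq_zero_or_one
  rcases c₁.pos_eq_zero_or_one with hp₁ | hp₁
  · exact exists_dominatingSet_of_pos hcov hconn₂ hp₁ (by omega) hs
  · rw [add_comm] at hs ⊢
    exact exists_dominatingSet_of_pos (fun v => (hcov v).symm) hconn₁ (by omega) hp₁ hs

/-- If there is a feasible non-disjoint connected `2`-median solution on the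
gadget of cost `s < n`, then `H` has a dominating set of size at most `s`. -/
theorem solution_implies_dominatingSet (n : ℕ) (H : SimpleGraph (Fin n))
    (V₁ V₂ : Finset (DV n)) (c₁ c₂ : DV n) (hc₁ : c₁ ∈ V₁) (hc₂ : c₂ ∈ V₂)
    (hcover : (↑V₁ ∪ ↑V₂ : Set (DV n)) = Set.univ)
    (hconn₁ : ((domGraph H).induce (↑V₁ : Set (DV n))).Connected)
    (hconn₂ : ((domGraph H).induce (↑V₂ : Set (DV n))).Connected)
    (s : ℕ) (hcost : (∑ v ∈ V₁, ddist v c₁) + (∑ v ∈ V₂, ddist v c₂) = s)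
    (hs : s < n) :
    ∃ S : Finset (Fin n), (∀ i : Fin n, i ∈ S ∨ ∃ j ∈ S, H.Adj i j) ∧ S.card ≤ s :=
  solution_implies_dominatingSet_general n H V₁ V₂ c₁ c₂ hcover hconn₁ hconn₂ s hcost hs
end

section
/- Let y_c^c ∈ [0,1] for c in a finite set C, with Σ_{c∈C} y_c^c ≤ k and y_c^c ≥ 1/2 for all c. Partition C as H = {c : y_c^c < 3/4} and O = {c : y_c^c ≥ 3/4}, and let a_c = 1 − y_c^c. Suppose a procedure maintains sets C_1, C_{1/2}, O' ⊆ O with the invariant that, initially, C_1 = ∅, C_{1/2} = H, O' = O, and each iteration either (i) moves one c ∈ O' to C_{1/2}, or (ii) moves one c ∈ O' to C_{1/2} and another r ∈ O' to C_1. Then the quantity |C_1| + (1/2)|C_{1/2}| + Σ_{c∈O'} y_c^c is at most k initially and never increases; in particular it stays at most k throughout. -/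
/-!
Every `y c` is at least `1/2`, and at least `3/4` on `O`. Moving `c` from `O'` to `C_{1/2}`
replaces `y c` by `1/2`; moving a pair to `C_{1/2}` and `C₁` replaces `y c + y r ≥ 3/2` by `3/2`.
Initially `H` and `O` partition `C`, and each `c ∈ H` is charged `1/2 ≤ y c` instead of `y c`.
-/

section

open Finset

variable {α : Type*} [DecidableEq α]

theorem mul_card_insert_add_sum_erase_le {S O : Finset α} {x : α} (hx : x ∈ O) (y : α → ℝ)
    {w : ℝ} (hw : 0 ≤ w) :
    w * #(insert x S) + ∑ c ∈ O.erase x, y c ≤ w * #S + ∑ c ∈ O, y c + (w - y x) := by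
  have hcard : w * #(insert x S) ≤ w * (#S + 1) :=
    mul_le_mul_of_nonneg_left (by exact_mod_cast card_insert_le x S) hw
  rw [sum_erase_eq_sub hx]
  linarith

theorem card_div_two_add_sum_le_sum_union {H O : Finset α} (hHO : Disjoint H O) {y : α → ℝ}
    (hy : ∀ c ∈ H, 1 / 2 ≤ y c) :
    (#H : ℝ) / 2 + ∑ c ∈ O, y c ≤ ∑ c ∈ H ∪ O, y c := by
  have hH : #H • (1 / 2 : ℝ) ≤ ∑ c ∈ H, y c := card_nsmul_le_sum H y _ hy
  rw [nsmul_eq_mul] at hH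
  rw [sum_union hHO]
  linarith

end

/-- The invariant `|C₁| + |C_{1/2}|/2 + Σ_{c ∈ O'} y c ≤ k` holds initially
(with `C₁ = ∅`, `C_{1/2} = H`, `O' = O`) and is preserved by both kinds of
update steps. -/
theorem inv_half_integral {C : Type*} [Fintype C] [DecidableEq C] (k : ℝ)
    (y : C → ℝ) (hy : ∀ c, 1 / 2 ≤ y c ∧ y c ≤ 1) (hsum : ∑ c, y c ≤ k)
    (H O : Finset C) (hH : ∀ c, c ∈ H ↔ y c < 3 / 4) (hO : ∀ c, c ∈ O ↔ 3 / 4 ≤ y c) :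
    ((∅ : Finset C).card + (H.card : ℝ) / 2 + ∑ c ∈ O, y c ≤ k) ∧
    (∀ C₁ C₁₂ O' : Finset C, O' ⊆ O →
      (C₁.card : ℝ) + (C₁₂.card : ℝ) / 2 + ∑ c ∈ O', y c ≤ k →
      ∀ c ∈ O',
        ((C₁.card : ℝ) + ((insert c C₁₂).card : ℝ) / 2 + ∑ c' ∈ O'.erase c, y c' ≤ k)) ∧
    (∀ C₁ C₁₂ O' : Finset C, O' ⊆ O →
      (C₁.card : ℝ) + (C₁₂.card : ℝ) / 2 + ∑ c ∈ O', y c ≤ k →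
      ∀ c ∈ O', ∀ r ∈ O', r ≠ c →
        (((insert r C₁).card : ℝ) + ((insert c C₁₂).card : ℝ) / 2
          + ∑ c' ∈ (O'.erase c).erase r, y c' ≤ k)) := by
  refine ⟨?_, ?_, ?_⟩
  · have hHO : Disjoint H O := Finset.disjoint_left.2 fun c hcH hcO =>
      ((hH c).1 hcH).not_ge ((hO c).1 hcO)
    have hunion : H ∪ O = Finset.univ := Finset.eq_univ_of_forall fun c => by
      simpa only [Finset.mem_union, hH, hO] using lt_or_ge (y c) (3 / 4)
    have := card_div_two_add_sum_le_sum_union hHO fun c _ => (hy c).1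
    rw [hunion] at this
    simp only [Finset.card_empty, Nat.cast_zero]
    linarith
  · intro C₁ C₁₂ O' _ hinv c hc
    have := mul_card_insert_add_sum_erase_le (S := C₁₂) hc y (w := 1 / 2) (by norm_num)
    linarith [(hy c).1]
  · intro C₁ C₁₂ O' hsub hinv c hc r hr hrc
    have hc' := mul_card_insert_add_sum_erase_le (S := C₁₂) hc y (w := 1 / 2) (by norm_num)
    have hr' := mul_card_insert_add_sum_erase_le (S := C₁) (Finset.mem_erase.2 ⟨hrc, hr⟩) y
      (w := 1) zero_le_one
    linarith [(hO c).1 (hsub hc), (hO r).1 (hsub hr)]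
end
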